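/- arXiv:2509.20247 — 9 statements merged into one kernel-verified Lean document; each statement's English description precedes it below -/
import Mathlib

section
/- Let a and b be nondecreasing sequences of length L with entries in {0,...,M}. If a ≤ b in the lexicographic order (there is an index l such that a_i = b_i for i < l and a_l < b_l, or a = b), then for every m ∈ {1,...,M}, the sequences obtained by restricting a and b to entries less than m (keeping order, padding with M at the end to length L) satisfy the same lexicographic inequality. -/
/-- Lexicographic order `a ≤ b` on sequences: either equal, or they agree before some
position `l` where `a l < b l`. -/
def lexLe {L : ℕ} (a b : Fin L → ℕ) : Prop :=
  a = b ∨ ∃ l : Fin L, (∀ i : Fin L, i < l → a i = b i) ∧ a l < b l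

/-- For nondecreasing sequences with entries in `{0,...,M}`, lexicographic order is
preserved by restriction: delete entries `≥ m` (replace them by the sentinel `M`,
which for monotone sequences is exactly deletion followed by padding with `M`). -/
theorem stmt2 (L M : ℕ) (a b : Fin L → ℕ) (ha : Monotone a) (hb : Monotone b)
    (haM : ∀ i, a i ≤ M) (hbM : ∀ i, b i ≤ M) (hab : lexLe a b) :
    ∀ m, 1 ≤ m → m ≤ M →
      lexLe (fun i => if a i < m then a i else M) (fun i => if b i < m then b i else M) := by
  intro m hm1 hmM
  rcases hab with h | ⟨l, hpre, hl⟩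
  · left; rw [h]
  by_cases ham : a l < m
  · right
    refine ⟨l, fun i hi => by simp only [hpre i hi], ?_⟩
    show (if a l < m then a l else M) < _; simp only [if_pos ham]
    by_cases hbm : b l < m
    · simpa [if_pos hbm] using hl
    · rw [if_neg hbm]
      exact lt_of_lt_of_le ham hmM
  · left
    funext i
    rcases lt_trichotomy i l with h | h | h
    · simp only [hpre i h]
    · subst h
      have hb' : ¬ b i < m := fun hb' => ham (hl.trans hb')
      rw [if_neg ham, if_neg hb']
    · have h1 : ¬ a i < m := fun h' => ham (lt_of_le_of_lt (ha h.le) h')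
      have h2 : ¬ b i < m := fun h' =>
        ham (lt_of_le_of_lt (hl.le.trans (hb h.le)) h')
      rw [if_neg h1, if_neg h2]
end

section
/- Let G be a connected undirected graph on vertices {0,1,...,n-1} (n ≥ 2) whose labeling satisfies: for every v ∈ {0,...,n-2}, the encoded neighbor set enc(N(v) \ {v+1}) ≥ enc(N(v+1) \ {v}), where enc(X) = Σ_{u∈X} 2^(n-u-1). Then every vertex v ≥ 1 has at least one neighbor u with u < v. -/
/-!
By connectivity some edge `ab` crosses from `{0, …, v-1}` to `{v, …, n-1}`. If `b > v`,
put `w = b - 1 ≥ v`. Should `w` have no neighbour below `v`, then `N(w) \ {b} ⊆ [v, n)` has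
encoding `< 2^(n-v)`, whereas `N(b) \ {w} ∋ a` has encoding `≥ 2^(n-a-1) ≥ 2^(n-v)`,
violating the constraint at `w`. Hence the crossing edge can be moved down one step at a
time until it ends at `v`.
-/

open scoped Classical

/-- Encoding of a finite set of naturals below `n`: `enc X = Σ_{x∈X} 2^(n-x-1)`. -/
def enc (n : ℕ) (S : Finset ℕ) : ℕ := ∑ x ∈ S, 2 ^ (n - x - 1)

/- The coercion in `s.image (fun u => (u : ℕ))` is elaborated as a monadic lift of the whole
finset `s`, so `Finset.mem_image` does not apply to it directly. -/
lemma mem_image_fin_val {n m : ℕ} {s : Finset (Fin n)} :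
    m ∈ s.image (fun u => (u : ℕ)) ↔ ∃ x ∈ s, (x : ℕ) = m := by
  simp only [Finset.pure_def, Finset.bind_def, Finset.sup_singleton_apply, Finset.image_id',
    Finset.mem_image]

lemma enc_lt_two_pow {n v : ℕ} {S : Finset ℕ} (hS : ∀ x ∈ S, v ≤ x ∧ x < n) :
    enc n S < 2 ^ (n - v) := by
  have hinj : Set.InjOn (fun x => n - x - 1) S := fun x hx y hy hxy => by
    have := hS x hx; have := hS y hy; simp only at hxy; omega
  rw [enc, ← Finset.sum_image (f := (2 ^ ·)) hinj]
  refine Nat.geomSum_lt le_rfl fun k hk => ?_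
  obtain ⟨x, hx, rfl⟩ := Finset.mem_image.mp hk
  have := hS x hx
  omega

lemma two_pow_le_enc {n a : ℕ} {T : Finset ℕ} (ha : a ∈ T) : 2 ^ (n - a - 1) ≤ enc n T :=
  Finset.single_le_sum (f := fun x => 2 ^ (n - x - 1)) (fun _ _ => Nat.zero_le _) ha

lemma enc_lt_enc_of_mem_lt {n v a : ℕ} {S T : Finset ℕ} (hS : ∀ x ∈ S, v ≤ x ∧ x < n)
    (ha : a ∈ T) (hav : a < v) : enc n S < enc n T :=
  calc enc n S < 2 ^ (n - v) := enc_lt_two_pow hS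
    _ ≤ 2 ^ (n - a - 1) := Nat.pow_le_pow_right two_pos (by omega)
    _ ≤ enc n T := two_pow_le_enc ha

lemma SimpleGraph.Preconnected.exists_adj_lt_le {α : Type*} [LinearOrder α]
    {G : SimpleGraph α} (hG : G.Preconnected) {u v : α} (huv : u < v) :
    ∃ a b, a < v ∧ v ≤ b ∧ G.Adj a b := by
  obtain ⟨d, -, hd₁, hd₂⟩ :=
    (hG u v).some.exists_boundary_dart {x | x < v} huv (lt_irrefl v)
  exact ⟨d.fst, d.snd, hd₁, not_lt.mp hd₂, d.adj⟩

section LexConstraint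

variable {n : ℕ} {G : SimpleGraph (Fin n)}

lemma exists_adj_lt_of_adj_succ {v : ℕ} {w : Fin n} (hw : (w : ℕ) + 1 < n)
    (hlex : enc n (((G.neighborFinset w).erase ⟨(w : ℕ) + 1, hw⟩).image (fun u => (u : ℕ))) ≥
      enc n (((G.neighborFinset ⟨(w : ℕ) + 1, hw⟩).erase w).image (fun u => (u : ℕ))))
    (hvw : v ≤ w) {a : Fin n} (hav : (a : ℕ) < v) (hadj : G.Adj a ⟨(w : ℕ) + 1, hw⟩) :
    ∃ x : Fin n, (x : ℕ) < v ∧ G.Adj x w := by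
  by_contra! hlow
  refine hlex.not_gt (enc_lt_enc_of_mem_lt (v := v) ?_ ?_ hav)
  · intro x hx
    obtain ⟨y, hy, rfl⟩ := mem_image_fin_val.mp hx
    have hyw : G.Adj y w := (G.mem_neighborFinset w y).mp (Finset.mem_of_mem_erase hy) |>.symm
    exact ⟨not_lt.mp fun h => hlow y h hyw, y.isLt⟩
  · refine mem_image_fin_val.mpr ⟨a, Finset.mem_erase.mpr ⟨?_, ?_⟩, rfl⟩
    · exact fun h => by rw [h] at hav; omega
    · exact (G.mem_neighborFinset _ _).mpr hadj.symm

lemma exists_adj_lt_of_adj_of_le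
    (hsym : ∀ v : Fin n, ∀ hv : (v : ℕ) + 1 < n,
      enc n (((G.neighborFinset v).erase ⟨(v : ℕ) + 1, hv⟩).image (fun u => (u : ℕ))) ≥
      enc n (((G.neighborFinset ⟨(v : ℕ) + 1, hv⟩).erase v).image (fun u => (u : ℕ))))
    {v b : Fin n} (hvb : v ≤ b) (hb : ∃ a < v, G.Adj a b) : ∃ a < v, G.Adj a v := by
  obtain ⟨b, hbn⟩ := b
  change (v : ℕ) ≤ b at hvb
  revert hbn
  induction b, hvb using Nat.le_induction with
  | base => exact fun _ hb => hb
  | succ m hvm ih =>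
    rintro hbn ⟨a, hav, hadj⟩
    have hm : m < n := by omega
    exact ih hm (exists_adj_lt_of_adj_succ hbn (hsym ⟨m, hm⟩ hbn) hvm hav hadj)

end LexConstraint

theorem stmt3_general (n : ℕ) (G : SimpleGraph (Fin n)) (hconn : G.Connected)
    (hsym : ∀ v : Fin n, ∀ hv : (v : ℕ) + 1 < n,
      enc n (((G.neighborFinset v).erase ⟨(v : ℕ) + 1, hv⟩).image (fun u => (u : ℕ))) ≥
      enc n (((G.neighborFinset ⟨(v : ℕ) + 1, hv⟩).erase v).image (fun u => (u : ℕ)))) :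
    ∀ v : Fin n, 0 < (v : ℕ) → ∃ u : Fin n, u < v ∧ G.Adj u v := by
  intro v hv
  obtain ⟨a, b, hav, hvb, hab⟩ :=
    hconn.preconnected.exists_adj_lt_le (u := ⟨0, v.pos⟩) (Fin.lt_def.mpr hv)
  exact exists_adj_lt_of_adj_of_le hsym hvb ⟨a, hav, hab⟩

/-- If a connected graph on `{0,...,n-1}` satisfies the lexicographic symmetry-breaking
constraints `enc(N(v)\{v+1}) ≥ enc(N(v+1)\{v})`, then every vertex `v ≥ 1` has a
neighbor with smaller index. -/
theorem stmt3 (n : ℕ) (hn : 2 ≤ n) (G : SimpleGraph (Fin n)) (hconn : G.Connected)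
    (hsym : ∀ v : Fin n, ∀ hv : (v : ℕ) + 1 < n,
      enc n (((G.neighborFinset v).erase ⟨(v : ℕ) + 1, hv⟩).image (fun u => (u : ℕ))) ≥
      enc n (((G.neighborFinset ⟨(v : ℕ) + 1, hv⟩).erase v).image (fun u => (u : ℕ)))) :
    ∀ v : Fin n, 0 < (v : ℕ) → ∃ u : Fin n, u < v ∧ G.Adj u v :=
  stmt3_general n G hconn hsym
end

section
/- Every finite connected undirected graph on n vertices admits a bijective labeling I : V → {0,...,n-1} such that for every v ∈ {0,...,n-2}, enc(N_I(v) \ {v+1}) ≥ enc(N_I(v+1) \ {v}), where N_I(v) is the set of labels of neighbors of the vertex labeled v and enc(X) = Σ_{u∈X} 2^(n-u-1). -/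
/-!
Order the labelings by the energy `Σ_{u ~ v} 2^(n-1-I u) 2^(n-1-I v)`, summed over ordered
adjacent pairs, and take one of maximal energy. Swapping the vertices labelled `k` and `k + 1`
halves the weight of one and doubles that of the other; only the edges joining these two vertices
to the rest of the graph change their contribution, and the change works out to
`2^(n-k-1) · (enc T - enc S)`, where `S`, `T` are the two sides of the `k`-th constraint. So
maximality forces every constraint.
-/

open scoped Classical

open Finset Matrix

theorem Matrix.IsSymm.dotProduct_mulVec_add {ι R : Type*} [Fintype ι] [CommRing R]
    {A : Matrix ι ι R} (hA : A.IsSymm) (f g : ι → R) :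
    (f + g) ⬝ᵥ A *ᵥ (f + g) = f ⬝ᵥ A *ᵥ f + 2 * (g ⬝ᵥ A *ᵥ f) + g ⬝ᵥ A *ᵥ g := by
  have hcomm : f ⬝ᵥ A *ᵥ g = g ⬝ᵥ A *ᵥ f := by
    rw [dotProduct_mulVec, ← mulVec_transpose, hA.eq, dotProduct_comm]
  simp only [mulVec_add, dotProduct_add, add_dotProduct, hcomm]
  ring

theorem Function.comp_swap_eq_add_smul {V R : Type*} [DecidableEq V] [Ring R] {x y : V}
    (hxy : x ≠ y) (f : V → R) :
    f ∘ Equiv.swap x y = f + (f y - f x) • (Pi.single x 1 - Pi.single y 1) := by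
  funext v
  rcases eq_or_ne v x with rfl | hvx
  · simp [hxy]
  rcases eq_or_ne v y with rfl | hvy
  · simp [hvx]
  simp [Equiv.swap_apply_of_ne_of_ne hvx hvy, hvx, hvy]

namespace SimpleGraph

variable {V R : Type*} [Fintype V] [DecidableEq V] (G : SimpleGraph V) [DecidableRel G.Adj]
  [CommRing R]

theorem sum_neighborFinset_eq_sum_erase_add {x y : V} (f : V → R) :
    ∑ u ∈ G.neighborFinset x, f u =
      ∑ u ∈ (G.neighborFinset x).erase y, f u + if G.Adj x y then f y else 0 := by
  split_ifs with h
  · exact (sum_erase_add _ _ ((G.mem_neighborFinset x y).2 h)).symm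
  · rw [erase_eq_of_notMem (by simpa using h), add_zero]

theorem dotProduct_adjMatrix_mulVec_comp_swap {x y : V} (hxy : x ≠ y) (f : V → R) :
    (f ∘ Equiv.swap x y) ⬝ᵥ G.adjMatrix R *ᵥ (f ∘ Equiv.swap x y) =
      f ⬝ᵥ G.adjMatrix R *ᵥ f + 2 * (f y - f x) *
        (∑ u ∈ (G.neighborFinset x).erase y, f u - ∑ u ∈ (G.neighborFinset y).erase x, f u) := by
  rw [Function.comp_swap_eq_add_smul hxy, G.isSymm_adjMatrix.dotProduct_mulVec_add]
  set e : V → R := Pi.single x 1 - Pi.single y 1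
  have he : ∀ g, e ⬝ᵥ G.adjMatrix R *ᵥ g =
      ∑ u ∈ G.neighborFinset x, g u - ∑ u ∈ G.neighborFinset y, g u := by
    simp [e, sub_dotProduct, adjMatrix_mulVec_apply]
  have hee : e ⬝ᵥ G.adjMatrix R *ᵥ e = if G.Adj x y then -2 else 0 := by
    simp only [he, e, Pi.sub_apply, sum_sub_distrib, sum_pi_single', mem_neighborFinset,
      G.adj_comm y x, SimpleGraph.irrefl, if_false]
    split_ifs <;> ring
  simp only [mulVec_smul, smul_dotProduct, dotProduct_smul, smul_eq_mul]
  rw [he, hee, G.sum_neighborFinset_eq_sum_erase_add (y := y) f,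
    G.sum_neighborFinset_eq_sum_erase_add (x := y) (y := x) f]
  simp only [G.adj_comm y x]
  split_ifs <;> ring

variable {n : ℕ}

def labelWeight (I : V ≃ Fin n) (v : V) : ℤ := 2 ^ (n - (I v : ℕ) - 1)

def labelingEnergy (I : V ≃ Fin n) : ℤ :=
  labelWeight I ⬝ᵥ G.adjMatrix ℤ *ᵥ labelWeight I

omit [Fintype V] in
theorem enc_image_erase (I : V ≃ Fin n) (s : Finset V) (w : V) :
    (enc n ((s.image fun u => (I u : ℕ)).erase (I w)) : ℤ) = ∑ u ∈ s.erase w, labelWeight I u := by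
  have hinj : Function.Injective fun u => (I u : ℕ) := Fin.val_injective.comp I.injective
  rw [← image_erase hinj, enc, sum_image hinj.injOn]
  push_cast
  rfl

theorem enc_neighbor_ge_of_forall_labelingEnergy_le (I : V ≃ Fin n)
    (hI : ∀ J : V ≃ Fin n, G.labelingEnergy J ≤ G.labelingEnergy I) (k : ℕ) (hk : k + 1 < n) :
    enc n (((G.neighborFinset (I.symm ⟨k, Nat.lt_of_succ_lt hk⟩)).image
        (fun u => (I u : ℕ))).erase (k + 1)) ≥
      enc n (((G.neighborFinset (I.symm ⟨k + 1, hk⟩)).image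
        (fun u => (I u : ℕ))).erase k) := by
  set x := I.symm ⟨k, Nat.lt_of_succ_lt hk⟩
  set y := I.symm ⟨k + 1, hk⟩
  have hx : (I x : ℕ) = k := by simp [x]
  have hy : (I y : ℕ) = k + 1 := by simp [y]
  have hxy : x ≠ y := fun h => by simpa [hx, hy] using congrArg (fun v => (I v : ℕ)) h
  have hwx : labelWeight I x = 2 * labelWeight I y := by
    rw [labelWeight, labelWeight, hx, hy, ← pow_succ']
    congr 1
    omega
  have hwy : 0 < labelWeight I y := by unfold labelWeight; positivity
  have hswap := hI ((Equiv.swap x y).trans I)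
  rw [labelingEnergy, labelingEnergy, show labelWeight ((Equiv.swap x y).trans I) =
    labelWeight I ∘ Equiv.swap x y from rfl, dotProduct_adjMatrix_mulVec_comp_swap G hxy,
    hwx] at hswap
  rw [← hy, ← hx, ge_iff_le, ← Nat.cast_le (α := ℤ), enc_image_erase, enc_image_erase]
  nlinarith

end SimpleGraph

theorem stmt4_general {V : Type*} [Fintype V] (n : ℕ) (hn : Fintype.card V = n)
    (G : SimpleGraph V) :
    ∃ I : V ≃ Fin n, ∀ k : ℕ, ∀ hk : k + 1 < n,
      enc n (((G.neighborFinset (I.symm ⟨k, Nat.lt_of_succ_lt hk⟩)).image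
          (fun u => (I u : ℕ))).erase (k + 1)) ≥
      enc n (((G.neighborFinset (I.symm ⟨k + 1, hk⟩)).image
          (fun u => (I u : ℕ))).erase k) := by
  have : Nonempty (V ≃ Fin n) := ⟨Fintype.equivFinOfCardEq hn⟩
  obtain ⟨I, hI⟩ := Finite.exists_max (G.labelingEnergy (n := n))
  exact ⟨I, G.enc_neighbor_ge_of_forall_labelingEnergy_le I hI⟩

/-- Every finite connected graph admits a bijective labeling `I : V ≃ Fin n` satisfying
the symmetry-breaking constraints `enc(N_I(k)\{k+1}) ≥ enc(N_I(k+1)\{k})` for all `k`. -/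
theorem stmt4 {V : Type*} [Fintype V] (n : ℕ) (hn : Fintype.card V = n)
    (G : SimpleGraph V) (hconn : G.Connected) :
    ∃ I : V ≃ Fin n, ∀ k : ℕ, ∀ hk : k + 1 < n,
      enc n (((G.neighborFinset (I.symm ⟨k, Nat.lt_of_succ_lt hk⟩)).image
          (fun u => (I u : ℕ))).erase (k + 1)) ≥
      enc n (((G.neighborFinset (I.symm ⟨k + 1, hk⟩)).image
          (fun u => (I u : ℕ))).erase k) :=
  stmt4_general n hn G
end

section
/- Every finite directed acyclic graph on n vertices admits a bijective labeling I : V → {0,...,n-1} that is a topological ordering (if u can reach v with u ≠ v then I(u) < I(v)) and such that for every k ∈ {0,...,n-2}, enc(S_I(k)) ≥ enc(S_I(k+1)), where S_I(k) is the set of labels of successors of the vertex labeled k and enc(X) = Σ_{u∈X} 2^(n-u-1). -/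
/-!
Build the labeling from the top label down. Call a vertex ready when all its successors are
already labeled; it can then take the largest free label without breaking topological order.
Greedily label a ready vertex of least `enc` (computed from the labels given so far, which later
steps do not change). If `h` received label `k + 1` and `w` then received `k`, either `w` was
already ready when `h` was chosen, so `enc S(k + 1) ≤ enc S(k)` by minimality, or `h` is a
successor of `w`, so `S(k + 1) ⊆ S(k)` by transitivity and acyclicity.
-/

open scoped Classical

noncomputable def succFin {V : Type*} [Fintype V] (A : V → V → Prop) (w : V) : Finset V :=
  Finset.univ.filter (fun x => x ≠ w ∧ Relation.TransGen A w x)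

theorem enc_mono {n : ℕ} {S T : Finset ℕ} (h : S ⊆ T) : enc n S ≤ enc n T :=
  Finset.sum_le_sum_of_subset h

theorem enc_succ_image_succ (n : ℕ) (S : Finset ℕ) :
    enc (n + 1) (S.image (· + 1)) = enc n S := by
  rw [enc, Finset.sum_image fun _ _ _ _ => Nat.succ_inj.1]
  simp [enc]

section

variable {V : Type*} [Fintype V] {A : V → V → Prop}

@[simp]
theorem mem_succFin {w x : V} : x ∈ succFin A w ↔ x ≠ w ∧ Relation.TransGen A w x := by
  simp [succFin]

theorem succFin_subset_of_mem (hacyc : ∀ x, ¬ Relation.TransGen A x x) {v w : V}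
    (h : v ∈ succFin A w) : succFin A v ⊆ succFin A w := by
  intro y hy
  rw [mem_succFin] at *
  have hwy : Relation.TransGen A w y := h.2.trans hy.2
  exact ⟨by rintro rfl; exact hacyc y hwy, hwy⟩

theorem exists_mem_forall_succFin_notMem (hacyc : ∀ x, ¬ Relation.TransGen A x x)
    {s : Set V} (hs : s.Nonempty) : ∃ w ∈ s, ∀ y ∈ succFin A w, y ∉ s := by
  have : IsTrans V (flip (Relation.TransGen A)) := ⟨fun _ _ _ h₁ h₂ => h₂.trans h₁⟩
  have : Std.Irrefl (flip (Relation.TransGen A)) := ⟨hacyc⟩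
  have hwf := Finite.wellFounded_of_trans_of_irrefl (flip (Relation.TransGen A))
  obtain ⟨w, hw, hmin⟩ := hwf.has_min s hs
  exact ⟨w, hw, fun y hy hys => hmin y hys (mem_succFin.1 hy).2⟩

variable (A)

/-- `l` lists the vertices holding the top `l.length` labels, in increasing order, so
`l.idxOf` is their final label shifted down by `n - l.length`; `enc` is invariant under that
shift. -/
noncomputable def succEnc (l : List V) (w : V) : ℕ :=
  enc l.length ((succFin A w).image l.idxOf)

def IsReady (l : List V) (w : V) : Prop :=
  w ∉ l ∧ ∀ y ∈ succFin A w, y ∈ l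

inductive IsGreedy : List V → Prop
  | nil : IsGreedy []
  | cons {l : List V} {w : V} (hl : IsGreedy l) (hw : IsReady A l w)
      (hmin : ∀ v, IsReady A l v → succEnc A l w ≤ succEnc A l v) : IsGreedy (w :: l)

variable {A}

theorem succEnc_cons {l : List V} {v w : V} (hv : v ∉ l) (hw : ∀ y ∈ succFin A w, y ∈ l) :
    succEnc A (v :: l) w = succEnc A l w := by
  have himage : (succFin A w).image (v :: l).idxOf =
      ((succFin A w).image l.idxOf).image (· + 1) := by
    rw [Finset.image_image]
    exact Finset.image_congr fun y hy => List.idxOf_cons_ne _ (by rintro rfl; exact hv (hw _ hy))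
  rw [succEnc, himage, List.length_cons, enc_succ_image_succ, succEnc]

theorem exists_isReady (hacyc : ∀ x, ¬ Relation.TransGen A x x) {l : List V}
    (hl : l.length < Fintype.card V) : ∃ w, IsReady A l w := by
  obtain ⟨v, -, hv⟩ := Finset.exists_mem_notMem_of_card_lt_card
    (s := l.toFinset) (t := Finset.univ) (by simpa using l.toFinset_card_le.trans_lt hl)
  obtain ⟨w, hw, hsucc⟩ :=
    exists_mem_forall_succFin_notMem hacyc (s := {x | x ∉ l}) ⟨v, by simpa using hv⟩
  exact ⟨w, hw, fun y hy => by simpa using hsucc y hy⟩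

theorem exists_isGreedy_length (hacyc : ∀ x, ¬ Relation.TransGen A x x) {m : ℕ}
    (hm : m ≤ Fintype.card V) : ∃ l, IsGreedy A l ∧ l.length = m := by
  induction m with
  | zero => exact ⟨[], .nil, rfl⟩
  | succ m ih =>
    obtain ⟨l, hl, rfl⟩ := ih (by omega)
    obtain ⟨v, hv⟩ := exists_isReady hacyc (l := l) (by omega)
    obtain ⟨w, hw, hmin⟩ := Finset.exists_min_image (Finset.univ.filter (IsReady A l))
      (succEnc A l) ⟨v, by simpa using hv⟩
    exact ⟨w :: l, .cons hl (by simpa using hw) (fun u hu => hmin u (by simpa using hu)), rfl⟩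

namespace IsGreedy

theorem nodup {l : List V} (hl : IsGreedy A l) : l.Nodup := by
  induction hl with
  | nil => exact List.nodup_nil
  | cons _ hw _ ih => exact List.nodup_cons.2 ⟨hw.1, ih⟩

theorem mem_of_mem_succFin {l : List V} (hl : IsGreedy A l) {w y : V} (hw : w ∈ l)
    (hy : y ∈ succFin A w) : y ∈ l := by
  induction hl with
  | nil => simp at hw
  | cons _ hv _ ih =>
    rcases List.mem_cons.1 hw with rfl | hw
    · exact List.mem_cons_of_mem _ (hv.2 y hy)
    · exact List.mem_cons_of_mem _ (ih hw)

theorem idxOf_lt {l : List V} (hl : IsGreedy A l) {w y : V} (hw : w ∈ l)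
    (hy : y ∈ succFin A w) : l.idxOf w < l.idxOf y := by
  induction hl with
  | nil => simp at hw
  | @cons l v hl hv _ ih =>
    rcases List.mem_cons.1 hw with rfl | hw
    · have hwy : w ≠ y := by rintro rfl; exact hv.1 (hv.2 w hy)
      simp [List.idxOf_cons_ne _ hwy]
    · have hvw : v ≠ w := by rintro rfl; exact hv.1 hw
      have hvy : v ≠ y := by rintro rfl; exact hv.1 (hl.mem_of_mem_succFin hw hy)
      simpa [List.idxOf_cons_ne _ hvw, List.idxOf_cons_ne _ hvy] using ih hw

theorem head_le (hacyc : ∀ x, ¬ Relation.TransGen A x x) {h : V} {t : List V}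
    (hl : IsGreedy A (h :: t)) {w : V} (hw : IsReady A (h :: t) w) :
    succEnc A (h :: t) h ≤ succEnc A (h :: t) w := by
  cases hl with | cons _ hh hmin =>
  by_cases hhw : h ∈ succFin A w
  · exact enc_mono (Finset.image_subset_image (succFin_subset_of_mem hacyc hhw))
  · have hwt : IsReady A t w :=
      ⟨fun hwt => hw.1 (List.mem_cons_of_mem _ hwt), fun y hy =>
        (List.mem_cons.1 (hw.2 y hy)).resolve_left (by rintro rfl; exact hhw hy)⟩
    rw [succEnc_cons hh.1 hh.2, succEnc_cons hh.1 hwt.2]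
    exact hmin w hwt

theorem isChain_map_succEnc (hacyc : ∀ x, ¬ Relation.TransGen A x x) {l : List V}
    (hl : IsGreedy A l) : (l.map (succEnc A l)).IsChain (· ≥ ·) := by
  induction hl with
  | nil => exact List.isChain_nil
  | @cons l w hl hw _ ih =>
    have hmap : (w :: l).map (succEnc A (w :: l)) = succEnc A l w :: l.map (succEnc A l) := by
      rw [List.map_cons, succEnc_cons hw.1 hw.2,
        List.map_congr_left fun v hv => succEnc_cons hw.1 fun y hy => hl.mem_of_mem_succFin hv hy]
    rw [hmap, List.isChain_cons]
    refine ⟨?_, ih⟩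
    cases l with
    | nil => simp
    | cons h t =>
      simp only [List.map_cons, List.head?_cons, Option.mem_def, Option.some.injEq]
      rintro _ rfl
      exact head_le hacyc hl hw

end IsGreedy

end

/-- Every finite DAG admits a bijective labeling that is a topological ordering and
satisfies `enc(S_I(k)) ≥ enc(S_I(k+1))` for all consecutive labels `k`. -/
theorem stmt5 {V : Type*} [Fintype V] (n : ℕ) (hn : Fintype.card V = n)
    (A : V → V → Prop) (hacyc : ∀ x, ¬ Relation.TransGen A x x) :
    ∃ I : V ≃ Fin n,
      (∀ u v : V, u ≠ v → Relation.TransGen A u v → I u < I v) ∧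
      ∀ k : ℕ, ∀ hk : k + 1 < n,
        enc n ((succFin A (I.symm ⟨k, Nat.lt_of_succ_lt hk⟩)).image (fun u => (I u : ℕ))) ≥
        enc n ((succFin A (I.symm ⟨k + 1, hk⟩)).image (fun u => (I u : ℕ))) := by
  obtain ⟨l, hl, rfl⟩ := exists_isGreedy_length hacyc hn.ge
  have hall : ∀ x, x ∈ l := by
    have := Finset.eq_univ_of_card l.toFinset (by rw [List.toFinset_card_of_nodup hl.nodup, hn])
    simpa [Finset.eq_univ_iff_forall] using this
  refine ⟨(hl.nodup.getEquivOfForallMemList l hall).symm,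
    fun u v huv huv' => hl.idxOf_lt (hall u) (mem_succFin.2 ⟨huv.symm, huv'⟩), fun k hk => ?_⟩
  have hchain := List.isChain_iff_getElem.1 (hl.isChain_map_succEnc hacyc) k (by simpa using hk)
  rw [List.getElem_map, List.getElem_map] at hchain
  exact hchain
end

section
/- In a finite directed acyclic graph, labeling vertices greedily from the largest index downward by always choosing, among unindexed vertices, one whose temporary successor set (labels of successors, with unindexed successors given the current index s) has maximal lexicographic order, always chooses a vertex all of whose successors are already indexed; consequently the resulting labeling is a topological ordering. -/
open scoped Classical

/-- Temporary successor-label set at step `s`: successors already indexed (label `> s`)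
keep their label; unindexed successors get the current index `s`. -/
noncomputable def Stmp {V : Type*} [Fintype V] {n : ℕ} (A : V → V → Prop) (I : V ≃ Fin n)
    (s : ℕ) (v : V) : Finset ℕ :=
  (succFin A v).image (fun u => if s < (I u : ℕ) then (I u : ℕ) else s)

lemma sum_range_two_pow (m : ℕ) : ∑ k ∈ Finset.range m, 2 ^ k = 2 ^ m - 1 := by
  induction m with
  | zero => simp
  | succ m ih =>
    rw [Finset.sum_range_succ, ih]
    have : 1 ≤ 2 ^ m := Nat.one_le_two_pow
    have : (2:ℕ) ^ (m+1) = 2 ^ m + 2 ^ m := by ring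
    omega

lemma sum_two_pow_lt {m : ℕ} {T : Finset ℕ} (h : ∀ k ∈ T, k < m) :
    ∑ k ∈ T, 2 ^ k < 2 ^ m := by
  have hsub : T ⊆ Finset.range m := fun k hk => Finset.mem_range.2 (h k hk)
  calc ∑ k ∈ T, 2 ^ k ≤ ∑ k ∈ Finset.range m, 2 ^ k :=
        Finset.sum_le_sum_of_subset hsub
    _ = 2 ^ m - 1 := sum_range_two_pow m
    _ < 2 ^ m := by have : 1 ≤ (2:ℕ) ^ m := Nat.one_le_two_pow; omega

lemma enc_lt {n s : ℕ} {S : Finset ℕ} (h : ∀ x ∈ S, s < x ∧ x < n) :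
    enc n S < 2 ^ (n - s - 1) := by
  unfold enc
  have hinj : Set.InjOn (fun x => n - x - 1) S := by
    intro a ha b hb hab
    have h1 := h a ha; have h2 := h b hb
    simp only at hab
    omega
  rw [← Finset.sum_image (f := fun k => (2:ℕ) ^ k)
      (g := fun x => n - x - 1) (fun a ha b hb => hinj ha hb)]
  apply sum_two_pow_lt
  intro k hk
  obtain ⟨x, hx, rfl⟩ := Finset.mem_image.1 hk
  have := h x hx
  omega

lemma enc_ge {n s : ℕ} {S : Finset ℕ} (h : s ∈ S) : 2 ^ (n - s - 1) ≤ enc n S := by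
  unfold enc
  exact Finset.single_le_sum (f := fun x => 2 ^ (n - x - 1)) (fun _ _ => Nat.zero_le _) h

/-- If a labeling `I` of a finite DAG is produced greedily from the largest index downwards,
each time choosing an unindexed vertex whose temporary successor set has maximal
lexicographic order (i.e. minimal encoding), then `I` is a topological ordering. -/
theorem stmt6 {V : Type*} [Fintype V] {n : ℕ} (A : V → V → Prop)
    (hacyc : ∀ x, ¬ Relation.TransGen A x x) (I : V ≃ Fin n)
    (hgreedy : ∀ s : Fin n, ∀ u : V, (I u : ℕ) ≤ (s : ℕ) →
      enc n (Stmp A I (s : ℕ) (I.symm s)) ≤ enc n (Stmp A I (s : ℕ) u)) :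
    ∀ u v : V, u ≠ v → Relation.TransGen A u v → I u < I v := by
  intro u v hne htg
  by_contra hle
  push_neg at hle
  set s : ℕ := (I u : ℕ) with hs
  have hvle : (I v : ℕ) ≤ s := Fin.le_iff_val_le_val.1 hle
  -- pick a maximal element w among vertices with label ≤ s
  have hwf : WellFounded (fun a b : V => Relation.TransGen A b a) := by
    have ht : IsTrans V (fun a b : V => Relation.TransGen A b a) :=
      ⟨fun a b c h1 h2 => h2.trans h1⟩
    have hi : IsIrrefl V (fun a b : V => Relation.TransGen A b a) :=
      ⟨fun a h => hacyc a h⟩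
    exact Finite.wellFounded_of_trans_of_irrefl _
  obtain ⟨w, hw, hmin⟩ := hwf.has_min {x : V | (I x : ℕ) ≤ s} ⟨u, by simp [hs]⟩
  -- every successor of w has label > s
  have hwsucc : ∀ x ∈ Stmp A I s w, s < x ∧ x < n := by
    intro x hx
    obtain ⟨y, hy, rfl⟩ := Finset.mem_image.1 hx
    simp only [succFin, Finset.mem_filter] at hy
    have hylt : s < (I y : ℕ) := by
      by_contra hcon
      push_neg at hcon
      exact hmin y hcon hy.2.2
    rw [if_pos hylt]
    exact ⟨hylt, (I y).isLt⟩
  have hencw : enc n (Stmp A I s w) < 2 ^ (n - s - 1) := enc_lt hwsucc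
  -- u = I.symm s, so greedy applies to u
  have hu : I.symm (I u) = u := I.symm_apply_apply u
  have hgr := hgreedy (I u) w hw
  rw [hu] at hgr
  rw [show ((I u : Fin n) : ℕ) = s from rfl] at hgr
  -- but s ∈ Stmp A I s u since v is an unindexed successor
  have hmem : s ∈ Stmp A I s u := by
    apply Finset.mem_image.2
    refine ⟨v, ?_, ?_⟩
    · simp only [succFin, Finset.mem_filter]
      exact ⟨Finset.mem_univ v, Ne.symm hne, htg⟩
    · rw [if_neg (by omega)]
  have := enc_ge (n := n) hmem
  omega
end

section
/- Let G be a directed graph on vertices {0,...,n-1} where node 0 exists, together with values d_v ∈ {0,...,n} and γ_{u,v} ∈ {0,1} satisfying: d_0 = 0; for v ≠ 0, 1 ≤ d_v ≤ n-1 if v is a vertex of G, d_v = n otherwise; γ_{u,v} = 1 implies edge u→v exists; every vertex v ≠ 0 has Σ_u γ_{u,v} ≥ 1; and for every edge u→v, d_v ≤ d_u + 1 with equality iff γ_{u,v} = 1 (precisely: γ_{u,v}=1 implies d_v = d_u + 1, and γ_{u,v}=0 with edge u→v present implies d_v ≤ d_u). Then for every vertex v, d_v equals the length of a shortest directed path from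 0 to v; in particular node 0 reaches every vertex. -/
open scoped Classical

/-- `pathLen A k u v`: there is a directed walk of length `k` from `u` to `v`. -/
def pathLen {V : Type*} (A : V → V → Prop) : ℕ → V → V → Prop
  | 0, u, v => u = v
  | k + 1, u, v => ∃ w, A u w ∧ pathLen A k w v

/-- Shortest-path distance, with sentinel `n` when `v` is unreachable from `u`. -/
noncomputable def gdist {V : Type*} (A : V → V → Prop) (n : ℕ) (u v : V) : ℕ :=
  if h : ∃ k, pathLen A k u v then Nat.find h else n


lemma pathLen_snoc {V : Type*} (A : V → V → Prop) :
    ∀ k u w v, pathLen A k u w → A w v → pathLen A (k+1) u v := by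
  intro k
  induction k with
  | zero => intro u w v h hwv; cases h; exact ⟨v, hwv, rfl⟩
  | succ k ih =>
      intro u w v h hwv
      obtain ⟨x, hux, hx⟩ := h
      exact ⟨x, hux, ih x w v hx hwv⟩

lemma pathLen_unsnoc {V : Type*} (A : V → V → Prop) :
    ∀ k u v, pathLen A (k+1) u v → ∃ w, pathLen A k u w ∧ A w v := by
  intro k
  induction k with
  | zero =>
      intro u v h
      obtain ⟨w, huw, hwv⟩ := h
      cases hwv; exact ⟨u, rfl, huw⟩
  | succ k ih =>
      intro u v h
      obtain ⟨x, hux, hx⟩ := h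
      obtain ⟨w, hw, hwv⟩ := ih x v hx
      exact ⟨w, ⟨x, hux, hw⟩, hwv⟩

/-- The simplified single-source encoding (conditions (C→₂)–(C→₅)) forces `d` to be the
true shortest-path distance from node `0`; in particular node `0` reaches every vertex. -/
theorem stmt7 (n : ℕ) (hn : 0 < n) (Vset : Finset (Fin n)) (h0 : (⟨0, hn⟩ : Fin n) ∈ Vset)
    (A : Fin n → Fin n → Prop) (γ : Fin n → Fin n → Prop) (d : Fin n → ℕ)
    (hA : ∀ u v, A u v → u ∈ Vset ∧ v ∈ Vset)
    (hd0 : d ⟨0, hn⟩ = 0)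
    (hdmem : ∀ v : Fin n, v ≠ ⟨0, hn⟩ → v ∈ Vset → 1 ≤ d v ∧ d v ≤ n - 1)
    (hdnon : ∀ v : Fin n, v ≠ ⟨0, hn⟩ → v ∉ Vset → d v = n)
    (hγA : ∀ u v, γ u v → A u v)
    (hγex : ∀ v ∈ Vset, v ≠ ⟨0, hn⟩ → ∃ u, γ u v)
    (hγeq : ∀ u v, γ u v → d v = d u + 1)
    (hγlt : ∀ u v, A u v → ¬ γ u v → d v ≤ d u) :
    ∀ v ∈ Vset, (∃ k, pathLen A k ⟨0, hn⟩ v) ∧ d v = gdist A n ⟨0, hn⟩ v := by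
  set z : Fin n := ⟨0, hn⟩ with hz
  have key1 : ∀ m, ∀ v ∈ Vset, d v ≤ m → pathLen A (d v) z v := by
    intro m
    induction m with
    | zero =>
        intro v hv hle
        by_cases hvz : v = z
        · subst hvz
          rw [hd0]; rfl
        · exact absurd (le_trans (hdmem v hvz hv).1 hle) (by norm_num)
    | succ m ih =>
        intro v hv hle
        by_cases hvz : v = z
        · subst hvz
          rw [hd0]; rfl
        · obtain ⟨u, hu⟩ := hγex v hv hvz
          have huV : u ∈ Vset := (hA u v (hγA u v hu)).1
          have hdv : d v = d u + 1 := hγeq u v hu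
          have hlu : d u ≤ m := by omega
          have hp := ih u huV hlu
          rw [hdv]
          exact pathLen_snoc A (d u) z u v hp (hγA u v hu)
  have key2 : ∀ k, ∀ v : Fin n, pathLen A k z v → d v ≤ k := by
    intro k
    induction k with
    | zero =>
        intro v h
        cases h
        simp [hd0]
    | succ k ih =>
        intro v h
        obtain ⟨w, hw, hwv⟩ := pathLen_unsnoc A k z v h
        have := ih w hw
        by_cases hγ : γ w v
        · have := hγeq w v hγ; omega
        · have := hγlt w v hwv hγ; omega
  intro v hv
  have hp : pathLen A (d v) z v := key1 (d v) v hv le_rfl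
  have hex : ∃ k, pathLen A k z v := ⟨d v, hp⟩
  refine ⟨hex, ?_⟩
  rw [gdist, dif_pos hex]
  exact le_antisymm (key2 _ v (Nat.find_spec hex)) (Nat.find_le hp)
end

section
/- In the greedy indexing algorithm for undirected graphs (Algorithm: at step s, rank unindexed nodes by lexicographic order of their sets of already-indexed neighbors, assign temporary indexes, and give index s to a node whose temporary full neighbor set has minimal lexicographic order), for any two nodes u, v with final indexes I(u) < I(v) and any step s, the temporary indexes satisfy I^s(u) ≤ I^s(v). -/
open scoped Classical

/-- The sorted sequence of a finite set of naturals, padded with the sentinel `n`. -/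
def seqOf (n : ℕ) (S : Finset ℕ) (i : ℕ) : ℕ := (S.sort (· ≤ ·)).getD i n

/-- Strict lexicographic order on finite sets of naturals, compared via their sorted
sequences padded with sentinel `n`. -/
def LOlt (n : ℕ) (S T : Finset ℕ) : Prop :=
  ∃ l : ℕ, (∀ i < l, seqOf n S i = seqOf n T i) ∧ seqOf n S l < seqOf n T l

/-- Non-strict lexicographic order. -/
def LOle (n : ℕ) (S T : Finset ℕ) : Prop := S = T ∨ LOlt n S T

/-- `N^s(v)`: labels of already-indexed neighbors of `v` at step `s`. -/
noncomputable def Nidx {V : Type*} [Fintype V] {n : ℕ} (G : SimpleGraph V) (I : V ≃ Fin n)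
    (s : ℕ) (v : V) : Finset ℕ :=
  ((G.neighborFinset v).filter (fun u => (I u : ℕ) < s)).image (fun u => (I u : ℕ))

/-- `rank^s(v)`: the number of unindexed nodes whose indexed-neighbor set is
lexicographically smaller than that of `v`. -/
noncomputable def rankOf {V : Type*} [Fintype V] {n : ℕ} (G : SimpleGraph V) (I : V ≃ Fin n)
    (s : ℕ) (v : V) : ℕ :=
  (Finset.univ.filter
    (fun u : V => s ≤ (I u : ℕ) ∧ LOlt n (Nidx G I s u) (Nidx G I s v))).card

/-- `I^s(v)`: temporary index at step `s`. -/
noncomputable def Itmp {V : Type*} [Fintype V] {n : ℕ} (G : SimpleGraph V) (I : V ≃ Fin n)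
    (s : ℕ) (v : V) : ℕ :=
  if (I v : ℕ) < s then (I v : ℕ) else rankOf G I s v + s

/-- `N^s_t(v)`: temporary neighbor set at step `s`. -/
noncomputable def Ntmp {V : Type*} [Fintype V] {n : ℕ} (G : SimpleGraph V) (I : V ≃ Fin n)
    (s : ℕ) (v : V) : Finset ℕ :=
  (G.neighborFinset v).image (Itmp G I s)

/-!
Lexicographic comparison of two label sets is decided by their parts below any threshold
`t ≤ n` as soon as those parts differ. Since `N^{s+1}(v)` is `N^s(v)` with possibly the new
largest label `s` added, and `N^s_t(v)` is `N^s(v)` together with temporary labels `≥ s`, a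
strict inequality `N^s(v) < N^s(u)` persists to every later `N^m` and to `N^s_t`.

Now let `I(u) < I(v)` and show `N^s(u) ≤ N^s(v)` for `s ≤ I(u)` by induction on `s`. The only
way to break it is a step where `N^s(u) = N^s(v)` and `v`, but not `u`, is adjacent to the node
indexed `s`; then `N^{s+1}(v) < N^{s+1}(u)`, hence `N^{I(u)}_t(v) < N^{I(u)}_t(u)`, contradicting
the choice of `u` at step `I(u)`. Consequently `rank^s(u) ≤ rank^s(v)`.
-/

section LexOrder

variable {n t : ℕ} {A B C S : Finset ℕ} {i : ℕ}

lemma seqOf_mem (h : i < S.card) : seqOf n S i ∈ S := by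
  unfold seqOf
  rw [List.getD_eq_getElem _ _ (by rwa [Finset.length_sort])]
  exact (Finset.mem_sort _).1 (List.getElem_mem _)

lemma seqOf_of_card_le (h : S.card ≤ i) : seqOf n S i = n :=
  List.getD_eq_default _ _ (by rwa [Finset.length_sort])

lemma sort_eq_sort_filter_lt_append (t : ℕ) (A : Finset ℕ) :
    A.sort (· ≤ ·) =
      (A.filter (· < t)).sort (· ≤ ·) ++ (A.filter (t ≤ ·)).sort (· ≤ ·) := by
  refine List.Perm.eq_of_pairwise' (Finset.pairwise_sort _ _) ?_ ?_
  · rw [List.pairwise_append]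
    refine ⟨Finset.pairwise_sort _ _, Finset.pairwise_sort _ _, fun a ha b hb => ?_⟩
    simp only [Finset.mem_sort, Finset.mem_filter] at ha hb
    omega
  · refine List.perm_of_nodup_nodup_toFinset_eq (Finset.sort_nodup _ _) ?_ ?_
    · refine List.nodup_append.2 ⟨Finset.sort_nodup _ _, Finset.sort_nodup _ _, ?_⟩
      rintro a ha b hb rfl
      simp only [Finset.mem_sort, Finset.mem_filter] at ha hb
      omega
    · ext a
      simp only [List.toFinset_append, Finset.sort_toFinset, Finset.mem_union, Finset.mem_filter]
      grind

lemma seqOf_eq_seqOf_filter_lt (h : i < (A.filter (· < t)).card) :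
    seqOf n A i = seqOf n (A.filter (· < t)) i := by
  unfold seqOf
  rw [sort_eq_sort_filter_lt_append t]
  exact List.getD_append _ _ _ _ (by rwa [Finset.length_sort])

lemma le_seqOf_of_card_filter_lt_le (htn : t ≤ n) (h : (A.filter (· < t)).card ≤ i) :
    t ≤ seqOf n A i := by
  have hsplit : seqOf n A i = seqOf n (A.filter (t ≤ ·)) (i - (A.filter (· < t)).card) := by
    unfold seqOf
    rw [sort_eq_sort_filter_lt_append t,
      List.getD_append_right _ _ _ _ (by rwa [Finset.length_sort]), Finset.length_sort]
  rcases lt_or_ge (i - (A.filter (· < t)).card) (A.filter (t ≤ ·)).card with hi | hi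
  · rw [hsplit]
    exact (Finset.mem_filter.1 (seqOf_mem hi)).2
  · rwa [hsplit, seqOf_of_card_le hi]

lemma LOlt.irrefl (h : LOlt n A A) : False := by
  obtain ⟨l, -, hl⟩ := h
  exact lt_irrefl _ hl

lemma LOlt.asymm (h₁ : LOlt n A B) (h₂ : LOlt n B A) : False := by
  obtain ⟨l₁, heq₁, hlt₁⟩ := h₁
  obtain ⟨l₂, heq₂, hlt₂⟩ := h₂
  rcases lt_trichotomy l₁ l₂ with h | rfl | h
  · have := heq₂ l₁ h; omega
  · omega
  · have := heq₁ l₂ h; omega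

lemma LOlt.trans (h₁ : LOlt n A B) (h₂ : LOlt n B C) : LOlt n A C := by
  obtain ⟨l₁, heq₁, hlt₁⟩ := h₁
  obtain ⟨l₂, heq₂, hlt₂⟩ := h₂
  refine ⟨min l₁ l₂, fun i hi => (heq₁ i (by omega)).trans (heq₂ i (by omega)), ?_⟩
  rcases lt_trichotomy l₁ l₂ with h | rfl | h
  · have := heq₂ l₁ h; rw [min_eq_left h.le]; omega
  · rw [min_self]; omega
  · have := heq₁ l₂ h; rw [min_eq_right h.le]; omega

lemma LOlt.trans_LOle (h₁ : LOlt n A B) (h₂ : LOle n B C) : LOlt n A C := by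
  rcases h₂ with rfl | h₂
  exacts [h₁, h₁.trans h₂]

lemma LOle.not_LOlt (h₁ : LOle n A B) (h₂ : LOlt n B A) : False := by
  rcases h₁ with rfl | h₁
  exacts [h₂.irrefl, h₁.asymm h₂]

lemma LOlt.of_filter_lt (htn : t ≤ n) (h : LOlt n (A.filter (· < t)) (B.filter (· < t))) :
    LOlt n A B := by
  obtain ⟨l, heq, hlt⟩ := h
  have hlt_t {S : Finset ℕ} {j : ℕ} (hj : j < (S.filter (· < t)).card) :
      seqOf n (S.filter (· < t)) j < t :=
    (Finset.mem_filter.1 (seqOf_mem hj)).2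
  have hlA : l < (A.filter (· < t)).card := by
    by_contra! hl
    rw [seqOf_of_card_le hl] at hlt
    rcases lt_or_ge l (B.filter (· < t)).card with hlB | hlB
    · have := hlt_t hlB; omega
    · rw [seqOf_of_card_le hlB] at hlt; omega
  have hiB {j : ℕ} (hj : j < (A.filter (· < t)).card)
      (hAB : seqOf n (A.filter (· < t)) j = seqOf n (B.filter (· < t)) j) :
      j < (B.filter (· < t)).card := by
    by_contra! hjB
    rw [seqOf_of_card_le hjB] at hAB
    have := hlt_t hj; omega
  refine ⟨l, fun i hi => ?_, ?_⟩
  · have hiA : i < (A.filter (· < t)).card := hi.trans hlA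
    rw [seqOf_eq_seqOf_filter_lt hiA, seqOf_eq_seqOf_filter_lt (hiB hiA (heq i hi)), heq i hi]
  · rw [seqOf_eq_seqOf_filter_lt hlA]
    rcases lt_or_ge l (B.filter (· < t)).card with hlB | hlB
    · rwa [seqOf_eq_seqOf_filter_lt hlB]
    · have := hlt_t hlA
      have := le_seqOf_of_card_filter_lt_le (n := n) (A := B) htn hlB
      omega

lemma LOlt_insert_self (htn : t < n) (hS : ∀ a ∈ S, a < t) : LOlt n (insert t S) S := by
  have hfilter : (insert t S).filter (· < t) = S := by
    ext a
    simp only [Finset.mem_filter, Finset.mem_insert]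
    constructor
    · rintro ⟨rfl | ha, hat⟩
      exacts [absurd hat (lt_irrefl _), ha]
    · exact fun ha => ⟨Or.inr ha, hS a ha⟩
  have hcard : S.card < (insert t S).card :=
    Finset.card_lt_card (Finset.ssubset_insert fun ht => lt_irrefl _ (hS t ht))
  refine ⟨S.card, fun i hi => ?_, ?_⟩
  · rw [seqOf_eq_seqOf_filter_lt (t := t) (by rwa [hfilter]), hfilter]
  · rw [seqOf_of_card_le le_rfl]
    rcases Finset.mem_insert.1 (seqOf_mem (n := n) hcard) with h | h
    · rwa [h]
    · exact (hS _ h).trans htn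

end LexOrder

section GreedyIndexing

variable {V : Type*} [Fintype V] {n : ℕ} (G : SimpleGraph V) (I : V ≃ Fin n)

lemma lt_of_mem_Nidx {t a : ℕ} {v : V} (ha : a ∈ Nidx G I t v) : a < t := by
  obtain ⟨u, hu, rfl⟩ := Finset.mem_image.1 ha
  exact (Finset.mem_filter.1 hu).2

lemma Nidx_zero (v : V) : Nidx G I 0 v = ∅ := by
  simp [Nidx]

lemma Nidx_succ {t : ℕ} (ht : t < n) (v : V) :
    Nidx G I (t + 1) v =
      if G.Adj v (I.symm ⟨t, ht⟩) then insert t (Nidx G I t v) else Nidx G I t v := by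
  ext a
  split_ifs with hadj
  all_goals simp only [Nidx, Finset.mem_insert, Finset.mem_image, Finset.mem_filter,
      SimpleGraph.mem_neighborFinset]
  · constructor
    · rintro ⟨u, ⟨hu, hut⟩, rfl⟩
      rcases Nat.lt_succ_iff_lt_or_eq.1 hut with hut | hut
      exacts [Or.inr ⟨u, ⟨hu, hut⟩, rfl⟩, Or.inl hut]
    · rintro (rfl | ⟨u, ⟨hu, hut⟩, rfl⟩)
      exacts [⟨_, ⟨hadj, by simp⟩, by simp⟩, ⟨u, ⟨hu, by omega⟩, rfl⟩]
  · constructor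
    · rintro ⟨u, ⟨hu, hut⟩, rfl⟩
      refine ⟨u, ⟨hu, lt_of_le_of_ne (Nat.lt_succ_iff.1 hut) fun h => hadj ?_⟩, rfl⟩
      rwa [← I.eq_symm_apply.2 (Fin.ext h)]
    · rintro ⟨u, ⟨hu, hut⟩, rfl⟩
      exact ⟨u, ⟨hu, by omega⟩, rfl⟩

lemma filter_Nidx_lt {t m : ℕ} (htm : t ≤ m) (v : V) :
    (Nidx G I m v).filter (· < t) = Nidx G I t v := by
  ext a
  simp only [Nidx, Finset.mem_filter, Finset.mem_image]
  constructor
  · rintro ⟨⟨u, ⟨hu, -⟩, rfl⟩, hut⟩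
    exact ⟨u, ⟨hu, hut⟩, rfl⟩
  · rintro ⟨u, ⟨hu, hut⟩, rfl⟩
    exact ⟨⟨u, ⟨hu, by omega⟩, rfl⟩, hut⟩

lemma filter_Ntmp_lt (t : ℕ) (v : V) : (Ntmp G I t v).filter (· < t) = Nidx G I t v := by
  ext a
  simp only [Ntmp, Nidx, Itmp, Finset.mem_filter, Finset.mem_image]
  constructor
  · rintro ⟨⟨u, hu, rfl⟩, hut⟩
    split_ifs at hut ⊢ with h
    exacts [⟨u, ⟨hu, h⟩, rfl⟩, by omega]
  · rintro ⟨u, ⟨hu, hut⟩, rfl⟩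
    exact ⟨⟨u, hu, if_pos hut⟩, hut⟩

lemma LOlt.Nidx_of_le {t m : ℕ} (htn : t ≤ n) (htm : t ≤ m) {u v : V}
    (h : LOlt n (Nidx G I t u) (Nidx G I t v)) : LOlt n (Nidx G I m u) (Nidx G I m v) :=
  LOlt.of_filter_lt htn (by rwa [filter_Nidx_lt G I htm, filter_Nidx_lt G I htm])

lemma LOlt.Ntmp {t : ℕ} (htn : t ≤ n) {u v : V}
    (h : LOlt n (Nidx G I t u) (Nidx G I t v)) : LOlt n (Ntmp G I t u) (Ntmp G I t v) :=
  LOlt.of_filter_lt htn (by rwa [filter_Ntmp_lt, filter_Ntmp_lt])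

lemma rankOf_le_rankOf {s : ℕ} {u v : V} (h : LOle n (Nidx G I s u) (Nidx G I s v)) :
    rankOf G I s u ≤ rankOf G I s v :=
  Finset.card_le_card <| Finset.monotone_filter_right _ fun _ _ => And.imp_right (·.trans_LOle h)

def IsGreedyIndexing : Prop :=
  ∀ s : Fin n, ∀ u : V, (s : ℕ) ≤ (I u : ℕ) →
    LOle n (Ntmp G I (s : ℕ) (I.symm s)) (Ntmp G I (s : ℕ) u)

variable {G I}

lemma not_LOlt_Nidx_of_lt (halg : IsGreedyIndexing G I) {u v : V} (huv : (I u : ℕ) < I v)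
    {m : ℕ} (hm : m ≤ I u) :
    ¬ LOlt n (Nidx G I m v) (Nidx G I m u) := fun h => by
  have hvu := (h.Nidx_of_le G I (hm.trans (I u).isLt.le) hm).Ntmp G I (I u).isLt.le
  exact (I.symm_apply_apply u ▸ halg (I u) v huv.le).not_LOlt hvu

lemma LOle_Nidx_of_lt (halg : IsGreedyIndexing G I) {u v : V} (huv : (I u : ℕ) < I v)
    {s : ℕ} (hsu : s ≤ I u) :
    LOle n (Nidx G I s u) (Nidx G I s v) := by
  induction s with
  | zero => exact Or.inl (by rw [Nidx_zero, Nidx_zero])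
  | succ s ih =>
    have hsn : s < n := by have := (I u).isLt; omega
    have hlt_s {w : V} : ∀ a ∈ Nidx G I s w, a < s := fun _ => lt_of_mem_Nidx G I
    rcases ih (by omega) with heq | hlt
    · have hvu := not_LOlt_Nidx_of_lt halg huv hsu
      rw [Nidx_succ G I hsn, Nidx_succ G I hsn, heq] at hvu ⊢
      split_ifs at hvu ⊢ with hu hv hv
      · exact Or.inl rfl
      · exact Or.inr (LOlt_insert_self hsn hlt_s)
      · exact absurd (LOlt_insert_self hsn hlt_s) hvu
      · exact Or.inl rfl
    · exact Or.inr (hlt.Nidx_of_le G I hsn.le s.le_succ)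

end GreedyIndexing

theorem stmt11_general {V : Type*} [Fintype V] {n : ℕ} (G : SimpleGraph V)
    (I : V ≃ Fin n)
    (halg : ∀ s : Fin n, ∀ u : V, (s : ℕ) ≤ (I u : ℕ) →
      LOle n (Ntmp G I (s : ℕ) (I.symm s)) (Ntmp G I (s : ℕ) u)) :
    ∀ u v : V, I u < I v → ∀ s : ℕ, Itmp G I s u ≤ Itmp G I s v := by
  intro u v huv s
  have huv' : (I u : ℕ) < I v := huv
  unfold Itmp
  split_ifs with hu hv hv
  · exact huv'.le
  · omega
  · omega
  · exact Nat.add_le_add_right (rankOf_le_rankOf G I (LOle_Nidx_of_lt halg huv' (not_lt.1 hu))) s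

/-- If the labeling `I` is produced by the greedy indexing algorithm for connected
undirected graphs (at each step `s` the node receiving index `s` has a temporary
neighbor set of minimal lexicographic order among unindexed nodes), then
`I(u) < I(v)` implies `I^s(u) ≤ I^s(v)` at every step `s`. -/
theorem stmt11 {V : Type*} [Fintype V] {n : ℕ} (G : SimpleGraph V) (hconn : G.Connected)
    (I : V ≃ Fin n)
    (halg : ∀ s : Fin n, ∀ u : V, (s : ℕ) ≤ (I u : ℕ) →
      LOle n (Ntmp G I (s : ℕ) (I.symm s)) (Ntmp G I (s : ℕ) u)) :
    ∀ u v : V, I u < I v → ∀ s : ℕ, Itmp G I s u ≤ Itmp G I s v :=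
  stmt11_general G I halg
end

section
/- Let G be a finite undirected graph on vertices {0,...,n-1} whose indexing satisfies the algorithmic invariant: at each step s, the set of already-indexed neighbors of the node indexed s has lexicographic order at most that of every node indexed later (restricted to labels < s). Then for vertices u, v with I(u) < I(v), the neighbor sets restricted to indexes below any threshold s ≤ I(u) satisfy LO(N(u) ∩ [0,s)) ≤ LO(N(v) ∩ [0,s)). -/
/-!
Restricting both sets to labels below `s` replaces each entry `≥ s` of their padded sorted
sequences by the sentinel. A strict lexicographic comparison at position `l` either survives
(if the smaller entry there is `< s`) or both restricted sequences become equal, since the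
sorted sequences are monotone. Apply this to the invariant at step `I(u)`, noting that
`N^s(w) = N^{I(u)}(w) ∩ [0, s)`.
-/

open scoped Classical

/-- Neighbor labels of `v` restricted to labels `< s`. -/
noncomputable def Nres (n : ℕ) (G : SimpleGraph (Fin n)) (s : ℕ) (v : Fin n) : Finset ℕ :=
  ((G.neighborFinset v).filter (fun w => (w : ℕ) < s)).image (fun w => (w : ℕ))

theorem List.getD_filter_lt {α : Type*} [LinearOrder α] {s d : α} (hsd : s ≤ d) :
    ∀ {L : List α}, L.Pairwise (· ≤ ·) → ∀ i,
      (L.filter (fun x => decide (x < s))).getD i d = if L.getD i d < s then L.getD i d else d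
  | [], _, i => by simp
  | a :: t, hL, i => by
    obtain ⟨ha, ht⟩ := List.pairwise_cons.1 hL
    by_cases has : a < s
    · cases i with
      | zero => simp [has]
      | succ i => simpa [has] using List.getD_filter_lt hsd ht i
    · have hge : ∀ x ∈ a :: t, s ≤ x := by
        simp only [List.mem_cons, forall_eq_or_imp]
        exact ⟨not_lt.1 has, fun x hx => (not_lt.1 has).trans (ha x hx)⟩
      have hnil : (a :: t).filter (fun x => decide (x < s)) = [] :=
        List.filter_eq_nil_iff.2 fun x hx => by simpa using hge x hx
      have hi : s ≤ (a :: t).getD i d := by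
        rcases lt_or_ge i (a :: t).length with hi | hi
        · rw [List.getD_eq_getElem _ _ hi]; exact hge _ (List.getElem_mem hi)
        · rwa [List.getD_eq_default _ _ hi]
      rw [hnil, if_neg (not_lt.2 hi)]
      simp

theorem Finset.sort_filter {α : Type*} [LinearOrder α] (p : α → Prop) [DecidablePred p]
    (S : Finset α) : (S.filter p).sort (· ≤ ·) = (S.sort (· ≤ ·)).filter p := by
  refine List.Perm.eq_of_pairwise' (Finset.pairwise_sort _ _)
    ((Finset.pairwise_sort _ _).filter _) ?_
  rw [← Multiset.coe_eq_coe, ← Multiset.filter_coe, Finset.sort_eq, Finset.sort_eq,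
    Finset.filter_val]

theorem seqOf_filter_lt {n s : ℕ} (hs : s ≤ n) (S : Finset ℕ) (i : ℕ) :
    seqOf n (S.filter (· < s)) i = if seqOf n S i < s then seqOf n S i else n := by
  rw [seqOf, Finset.sort_filter]
  exact List.getD_filter_lt hs (Finset.pairwise_sort _ _) i

theorem seqOf_monotone {n : ℕ} {S : Finset ℕ} (hS : ∀ x ∈ S, x ≤ n) : Monotone (seqOf n S) := by
  intro i j hij
  set L := S.sort (· ≤ ·)
  rcases lt_or_ge j L.length with hj | hj
  · rw [seqOf, seqOf, List.getD_eq_getElem _ _ (hij.trans_lt hj), List.getD_eq_getElem _ _ hj]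
    exact S.sortedLT_sort.sortedLE.getElem_le_getElem_of_le hij
  · rw [seqOf, seqOf, List.getD_eq_default _ _ hj]
    rcases lt_or_ge i L.length with hi | hi
    · rw [List.getD_eq_getElem _ _ hi]; exact hS _ ((Finset.mem_sort _).1 (L.getElem_mem hi))
    · rw [List.getD_eq_default _ _ hi]

theorem mem_iff_exists_seqOf_eq {n x : ℕ} (hx : x < n) (S : Finset ℕ) :
    x ∈ S ↔ ∃ i, seqOf n S i = x := by
  rw [← Finset.mem_sort (· ≤ ·), List.mem_iff_getElem]
  constructor
  · rintro ⟨i, hi, rfl⟩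
    exact ⟨i, List.getD_eq_getElem _ _ hi⟩
  · rintro ⟨i, rfl⟩
    rcases lt_or_ge i (S.sort (· ≤ ·)).length with hi | hi
    · exact ⟨i, hi, (List.getD_eq_getElem _ _ hi).symm⟩
    · rw [seqOf, List.getD_eq_default _ _ hi] at hx; exact absurd hx (lt_irrefl n)

theorem eq_of_seqOf_eq {n : ℕ} {S T : Finset ℕ} (hS : ∀ x ∈ S, x < n) (hT : ∀ x ∈ T, x < n)
    (h : seqOf n S = seqOf n T) : S = T := by
  ext x
  by_cases hx : x < n
  · rw [mem_iff_exists_seqOf_eq hx, mem_iff_exists_seqOf_eq hx, h]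
  · exact iff_of_false (fun hxS => hx (hS x hxS)) (fun hxT => hx (hT x hxT))

theorem LOle.filter_lt {n s : ℕ} (hs : s ≤ n) {S T : Finset ℕ} (hS : ∀ x ∈ S, x < n)
    (hT : ∀ x ∈ T, x < n) (h : LOle n S T) :
    LOle n (S.filter (· < s)) (T.filter (· < s)) := by
  rcases h with rfl | ⟨l, hpre, hl⟩
  · exact .inl rfl
  have hS' := seqOf_filter_lt hs S
  have hT' := seqOf_filter_lt hs T
  by_cases hls : seqOf n S l < s
  · refine .inr ⟨l, fun i hi => by rw [hS', hT', hpre i hi], ?_⟩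
    rw [hS', hT', if_pos hls]
    split_ifs <;> omega
  · refine .inl (eq_of_seqOf_eq (fun x hx => hS x (Finset.mem_filter.1 hx).1)
      (fun x hx => hT x (Finset.mem_filter.1 hx).1) (funext fun i => ?_))
    rw [hS', hT']
    rcases lt_or_ge i l with hi | hi
    · rw [hpre i hi]
    · have hSi := seqOf_monotone (fun x hx => (hS x hx).le) hi
      have hTi := seqOf_monotone (fun x hx => (hT x hx).le) hi
      rw [if_neg (by omega), if_neg (by omega)]

theorem Nres_eq_filter_lt {n s t : ℕ} (G : SimpleGraph (Fin n)) (hst : s ≤ t) (v : Fin n) :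
    Nres n G s v = (Nres n G t v).filter (· < s) := by
  simp only [Nres, Finset.filter_image, Finset.filter_filter]
  congr 1
  exact Finset.filter_congr fun w _ => ⟨fun h => ⟨h.trans_le hst, h⟩, And.right⟩

-- `Nres` elaborates with the neighbourhood coerced to `Finset ℕ` through the `Finset` monad.
theorem lt_of_mem_Nres {n s x : ℕ} {G : SimpleGraph (Fin n)} {v : Fin n}
    (hx : x ∈ Nres n G s v) : x < n := by
  simp only [Nres, Finset.pure_def, Finset.bind_def, Finset.sup_singleton_apply,
    Finset.image_id', Finset.mem_filter, Finset.mem_image] at hx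
  obtain ⟨⟨w, -, rfl⟩, -⟩ := hx
  exact w.isLt

/-- If an indexing of an undirected graph satisfies the algorithmic invariant (at each
step `s` the indexed-neighbor set of the node indexed `s` is lexicographically at most
that of each node indexed later, restricted to labels `< s`), then for `I(u) < I(v)` the
neighbor sets restricted below any threshold `s ≤ I(u)` compare in the same way. -/
theorem stmt12 (n : ℕ) (G : SimpleGraph (Fin n))
    (halg : ∀ s v : Fin n, s ≤ v →
      LOle n (Nres n G (s : ℕ) s) (Nres n G (s : ℕ) v)) :
    ∀ u v : Fin n, u < v → ∀ s : ℕ, s ≤ (u : ℕ) →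
      LOle n (Nres n G s u) (Nres n G s v) := by
  intro u v huv s hsu
  rw [Nres_eq_filter_lt G hsu u, Nres_eq_filter_lt G hsu v]
  exact (halg u v huv.le).filter_lt (hsu.trans u.isLt.le) (fun _ => lt_of_mem_Nres)
    (fun _ => lt_of_mem_Nres)
end

section
/- Let G be a weakly connected DAG on labels {0,...,n-1} produced by the DAG indexing algorithm (indexes assigned from n-1 down to 0, each time to an unindexed node whose temporary successor-label set has maximal lexicographic order, where unindexed successors get the current index). Then the resulting labeling satisfies LO(S(v)) ≤ LO(S(v+1)) for all v ∈ {0,...,n-2}, where S(v) is the set of labels of successors of the node labeled v. -/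
open scoped Classical

/-- Labels of the successors of `v`. -/
noncomputable def Slab {V : Type*} [Fintype V] {n : ℕ} (A : V → V → Prop) (I : V ≃ Fin n)
    (v : V) : Finset ℕ :=
  (succFin A v).image (fun u => (I u : ℕ))

/-!
A node's successors all carry larger labels: when label `s` is handed out, some unindexed
node `u` has only indexed successors (take `u` minimal for reachability among the unindexed
nodes, using acyclicity), so every entry of its temporary set exceeds `s`. If the chosen node
had an unindexed successor, `s` itself would lie in its temporary set, making it
lexicographically smaller than that of `u` and contradicting maximality.

Consequently, at step `k + 1` the temporary sets of the nodes labeled `k` and `k + 1` are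
their true successor-label sets, and the maximality of the choice at that step is exactly
`LO(S(k)) ≤ LO(S(k + 1))`.
-/

/-- At step `s` the nodes still unindexed are exactly those with label `≤ s`. -/
def IsDAGIndexing {V : Type*} [Fintype V] {n : ℕ} (A : V → V → Prop) (I : V ≃ Fin n) : Prop :=
  ∀ s : Fin n, ∀ u : V, (I u : ℕ) ≤ (s : ℕ) →
    LOle n (Stmp A I (s : ℕ) u) (Stmp A I (s : ℕ) (I.symm s))

lemma seqOf_mem_or_eq (n : ℕ) (S : Finset ℕ) (i : ℕ) :
    seqOf n S i ∈ S ∨ seqOf n S i = n := by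
  unfold seqOf
  rcases lt_or_ge i (S.sort (· ≤ ·)).length with h | h
  · left
    rw [List.getD_eq_getElem _ _ h]
    exact (Finset.mem_sort _).mp (List.getElem_mem h)
  · exact .inr (List.getD_eq_default _ _ h)

lemma seqOf_zero_le_of_mem (n : ℕ) {S : Finset ℕ} {x : ℕ} (hx : x ∈ S) :
    seqOf n S 0 ≤ x := by
  unfold seqOf
  have hx' : x ∈ S.sort (· ≤ ·) := (Finset.mem_sort _).mpr hx
  obtain ⟨j, hj⟩ := List.mem_iff_get.mp hx'
  have h0 : 0 < (S.sort (· ≤ ·)).length := j.2.trans_le' (Nat.zero_le _)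
  rw [List.getD_eq_getElem _ _ h0]
  have := List.Pairwise.rel_get_of_le (Finset.pairwise_sort S (· ≤ ·))
    (show (⟨0, h0⟩ : Fin _) ≤ j from Fin.mk_le_of_le_val (Nat.zero_le _))
  rw [hj] at this
  simpa [List.get_eq_getElem] using this

lemma lt_seqOf_zero_of_forall_lt {n x : ℕ} {S : Finset ℕ} (hxn : x < n)
    (hS : ∀ t ∈ S, x < t) : x < seqOf n S 0 := by
  rcases seqOf_mem_or_eq n S 0 with h | h
  · exact hS _ h
  · rwa [h]

lemma not_LOle_of_seqOf_zero_lt {n : ℕ} {S T : Finset ℕ}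
    (h : seqOf n T 0 < seqOf n S 0) : ¬ LOle n S T := by
  rintro (rfl | ⟨l, hprefix, hlt⟩)
  · exact lt_irrefl _ h
  · rcases Nat.eq_zero_or_pos l with rfl | hl
    · exact lt_asymm h hlt
    · exact (hprefix 0 hl).not_gt h

lemma exists_mem_forall_transGen_not_mem {V : Type*} [Finite V] {A : V → V → Prop}
    (hacyc : ∀ x, ¬ Relation.TransGen A x x) {P : Set V} (hP : P.Nonempty) :
    ∃ u ∈ P, ∀ y, Relation.TransGen A u y → y ∉ P := by
  have : Std.Irrefl (fun a b : V => Relation.TransGen A b a) := ⟨hacyc⟩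
  have : IsTrans V (fun a b => Relation.TransGen A b a) := ⟨fun _ _ _ h1 h2 => h2.trans h1⟩
  obtain ⟨u, hu, hmin⟩ := (Finite.wellFounded_of_trans_of_irrefl
    (fun a b : V => Relation.TransGen A b a)).has_min P hP
  exact ⟨u, hu, fun y hy hyP => hmin y hyP hy⟩

section Indexing

variable {V : Type*} [Fintype V] {n : ℕ} {A : V → V → Prop} {I : V ≃ Fin n}

lemma Stmp_eq_Slab_of_le {s : ℕ} {v : V} (h : ∀ u ∈ succFin A v, s ≤ (I u : ℕ)) :
    Stmp A I s v = Slab A I v := by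
  refine Finset.image_congr fun u hu => ?_
  have := h u hu
  split <;> omega

lemma IsDAGIndexing.lt_of_mem_succFin (hacyc : ∀ x, ¬ Relation.TransGen A x x)
    (halg : IsDAGIndexing A I) (s : Fin n) {x : V} (hx : x ∈ succFin A (I.symm s)) :
    (s : ℕ) < I x := by
  by_contra! hle
  have hs_mem : (s : ℕ) ∈ Stmp A I s (I.symm s) :=
    Finset.mem_image.mpr ⟨x, hx, by rw [if_neg hle.not_gt]⟩
  obtain ⟨u, hu, hmin⟩ := exists_mem_forall_transGen_not_mem hacyc
    (P := {u : V | (I u : ℕ) ≤ s}) ⟨I.symm s, by simp⟩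
  have hu_gt : ∀ t ∈ Stmp A I s u, (s : ℕ) < t := by
    intro t ht
    obtain ⟨y, hy, rfl⟩ := Finset.mem_image.mp ht
    have hys : (s : ℕ) < I y := not_le.mp (hmin y (Finset.mem_filter.mp hy).2.2)
    simpa only [if_pos hys]
  exact not_LOle_of_seqOf_zero_lt
    ((seqOf_zero_le_of_mem n hs_mem).trans_lt (lt_seqOf_zero_of_forall_lt s.isLt hu_gt))
    (halg s u hu)

end Indexing

theorem stmt13_general {V : Type*} [Fintype V] {n : ℕ} (A : V → V → Prop)
    (hacyc : ∀ x, ¬ Relation.TransGen A x x)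
    (I : V ≃ Fin n)
    (halg : ∀ s : Fin n, ∀ u : V, (I u : ℕ) ≤ (s : ℕ) →
      LOle n (Stmp A I (s : ℕ) u) (Stmp A I (s : ℕ) (I.symm s))) :
    ∀ k : ℕ, ∀ hk : k + 1 < n,
      LOle n (Slab A I (I.symm ⟨k, Nat.lt_of_succ_lt hk⟩))
             (Slab A I (I.symm ⟨k + 1, hk⟩)) := by
  intro k hk
  have hlt := IsDAGIndexing.lt_of_mem_succFin hacyc halg
  have hv : Stmp A I (k + 1) (I.symm ⟨k, Nat.lt_of_succ_lt hk⟩) =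
      Slab A I (I.symm ⟨k, Nat.lt_of_succ_lt hk⟩) :=
    Stmp_eq_Slab_of_le fun u hu => hlt _ hu
  have hw : Stmp A I (k + 1) (I.symm ⟨k + 1, hk⟩) = Slab A I (I.symm ⟨k + 1, hk⟩) :=
    Stmp_eq_Slab_of_le fun u hu => (hlt _ hu).le
  have := halg ⟨k + 1, hk⟩ (I.symm ⟨k, Nat.lt_of_succ_lt hk⟩) (by simp)
  rwa [hv, hw] at this

/-- If a weakly connected DAG is labeled by the DAG indexing algorithm (indexes assigned
from `n-1` down to `0`, each time to an unindexed node whose temporary successor set has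
maximal lexicographic order), then `LO(S(v)) ≤ LO(S(v+1))` for all consecutive labels. -/
theorem stmt13 {V : Type*} [Fintype V] {n : ℕ} (A : V → V → Prop)
    (hacyc : ∀ x, ¬ Relation.TransGen A x x)
    (hwc : ∀ u v : V, Relation.ReflTransGen (fun a b => A a b ∨ A b a) u v)
    (I : V ≃ Fin n)
    (halg : ∀ s : Fin n, ∀ u : V, (I u : ℕ) ≤ (s : ℕ) →
      LOle n (Stmp A I (s : ℕ) u) (Stmp A I (s : ℕ) (I.symm s))) :
    ∀ k : ℕ, ∀ hk : k + 1 < n,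
      LOle n (Slab A I (I.symm ⟨k, Nat.lt_of_succ_lt hk⟩))
             (Slab A I (I.symm ⟨k + 1, hk⟩)) :=
  stmt13_general A hacyc I halg
end
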